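/- Let N be an odd positive integer, θ ∈ (0, π/2), k ∈ {0, 1, …, 2N−1}, λ_k = exp(πik/N), C = 2N/(1 + (−1)^k·cos^N θ), and let ρ_k be the 2×2 matrix with entries (ρ_k)_{c,c'} = (1/C)·Σ_{n=0}^{N−1} v_c(n)·conj(v_{c'}(n)), where v_0(n) = a_n(λ_k) and v_1(n) = b_n(λ_k). Then the eigenvalues of ρ_k are μ_± = (1 ± cos^(N−1)θ)/2; in particular they are independent of k, so every eigenstate of the walk has the same coin–walker entanglement. -/

import Mathlib

/-!
Since `|λ| = 1`, every factor of `a_n(λ)` is a quotient `conj d / d`, so `|a_n| = 1`, and the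
entries of `ρ` become sums over `n` of `1 / (1 + z ω^{±n})` (for `|b_n|²` after a partial-fraction
split). For odd `N` and a primitive `N`-th root of unity `ζ`, expanding geometric series gives
`Σ_{n<N} 1 / (1 + z ζⁿ) = N / (1 + z^N)`. With `u = (λ cos θ)^N = ±cos^N θ` this yields
`ρ = ½ [[1 + u, u tan θ], [u tan θ, 1 - u]]`, of trace `1` and determinant
`(1 - u² / cos² θ) / 4 = (1 - cos^(2N-2) θ) / 4`.
-/

open Complex

/-- `ω = exp(2πi/N)`. -/
noncomputable def omegaN (N : ℕ) : ℂ := Complex.exp (2 * Real.pi * Complex.I / N)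

/-- `a_n(λ) = ω^(−n(n−1)/2) · ∏_{j=0}^{n−1} (1 + λ⁻¹ωʲ/cosθ)/(1 + λω⁻ʲ/cosθ)`. -/
noncomputable def aCoef (N : ℕ) (θ : ℝ) (lam : ℂ) (n : ℕ) : ℂ :=
  (omegaN N)⁻¹ ^ (n * (n - 1) / 2) *
    ∏ j ∈ Finset.range n,
      (1 + lam⁻¹ * omegaN N ^ j / (Real.cos θ : ℂ)) /
      (1 + lam * (omegaN N)⁻¹ ^ j / (Real.cos θ : ℂ))

/-- `b_n(λ) = a_n(λ)·tanθ/(1 + λω⁻ⁿ/cosθ)`. -/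
noncomputable def bCoef (N : ℕ) (θ : ℝ) (lam : ℂ) (n : ℕ) : ℂ :=
  aCoef N θ lam n * (Real.tan θ : ℂ) / (1 + lam * (omegaN N)⁻¹ ^ n / (Real.cos θ : ℂ))

/-- The reduced density matrix of the coin in the normalized eigenstate with
eigenvalue `λ`: `(ρ)_{c,c'} = (1/C)·Σ_{n<N} v_c(n)·conj(v_{c'}(n))` where
`v_0(n) = a_n(λ)` and `v_1(n) = b_n(λ)`. -/
noncomputable def coinRho (N : ℕ) (θ : ℝ) (lam : ℂ) (C : ℂ) :
    Matrix (Fin 2) (Fin 2) ℂ := fun c c' =>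
  (1 / C) * ∑ n ∈ Finset.range N,
    (if c = 0 then aCoef N θ lam n else bCoef N θ lam n) *
      (starRingEnd ℂ) (if c' = 0 then aCoef N θ lam n else bCoef N θ lam n)

open ComplexConjugate

theorem IsPrimitiveRoot.sum_inv_one_sub_mul_pow {K : Type*} [Field K] {N : ℕ} {ζ : K}
    (hζ : IsPrimitiveRoot ζ N) {z : K} (hz : z ^ N ≠ 1) :
    ∑ n ∈ Finset.range N, (1 - z * ζ ^ n)⁻¹ = N / (1 - z ^ N) := by
  have hzN : 1 - z ^ N ≠ 0 := sub_ne_zero.mpr hz.symm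
  have hpow (n : ℕ) : (z * ζ ^ n) ^ N = z ^ N := by
    rw [mul_pow, ← pow_mul, mul_comm n, pow_mul, hζ.pow_eq_one, one_pow, mul_one]
  have hgeom (n : ℕ) : (1 - z * ζ ^ n)⁻¹ = (∑ j ∈ Finset.range N, (z * ζ ^ n) ^ j) / (1 - z ^ N) := by
    have hne : 1 - z * ζ ^ n ≠ 0 := fun h => hz (by rw [← hpow n, ← sub_eq_zero.mp h, one_pow])
    rw [eq_div_iff hzN, ← hpow n, ← mul_neg_geom_sum, inv_mul_cancel_left₀ hne]
  have hroot (j : ℕ) (hj : j ∈ Finset.range N) :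
      ∑ n ∈ Finset.range N, (ζ ^ j) ^ n = if j = 0 then (N : K) else 0 := by
    split_ifs with hj0
    · simp [hj0]
    · rw [geom_sum_eq (hζ.pow_ne_one_of_pos_of_lt hj0 (Finset.mem_range.mp hj)),
        ← pow_mul, mul_comm, pow_mul, hζ.pow_eq_one, one_pow, sub_self, zero_div]
  -- only the `j = 0` term of the double sum survives
  rw [Finset.sum_congr rfl fun n _ => hgeom n, ← Finset.sum_div, Finset.sum_comm]
  congr 1
  calc ∑ j ∈ Finset.range N, ∑ n ∈ Finset.range N, (z * ζ ^ n) ^ j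
      = ∑ j ∈ Finset.range N, z ^ j * if j = 0 then (N : K) else 0 := by
        refine Finset.sum_congr rfl fun j hj => ?_
        simp_rw [← hroot j hj, Finset.mul_sum, mul_pow, pow_right_comm ζ]
    _ = N := by simp +contextual [eq_comm]

theorem IsPrimitiveRoot.sum_inv_one_add_mul_pow_of_odd {K : Type*} [Field K] {N : ℕ} {ζ : K}
    (hζ : IsPrimitiveRoot ζ N) (hN : Odd N) {z : K} (hz : z ^ N ≠ -1) :
    ∑ n ∈ Finset.range N, (1 + z * ζ ^ n)⁻¹ = N / (1 + z ^ N) := by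
  have h := hζ.sum_inv_one_sub_mul_pow (z := -z) (by rwa [hN.neg_pow, Ne, neg_eq_iff_eq_neg])
  simpa [hN.neg_pow, sub_eq_add_neg] using h

theorem one_add_ne_zero_of_norm_ne_one {R : Type*} [SeminormedRing R] [NormOneClass R] {u : R}
    (hu : ‖u‖ ≠ 1) : 1 + u ≠ 0 := by
  intro h
  rw [← neg_eq_of_add_eq_zero_right h, norm_neg, norm_one] at hu
  exact hu rfl

theorem pow_ne_neg_one_of_norm_ne_one {R : Type*} [NormedDivisionRing R] {z : R}
    (hz : ‖z‖ ≠ 1) {N : ℕ} (hN : N ≠ 0) : z ^ N ≠ -1 := by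
  intro h
  apply hz
  rw [← pow_eq_one_iff_of_nonneg (norm_nonneg z) hN, ← norm_pow, h, norm_neg, norm_one]

theorem inv_one_add_mul_sub_inv_one_add_div {K : Type*} [Field K] {c t w : K}
    (ht : (1 + t ^ 2) * c ^ 2 = 1) (hw : w ≠ 0) (h₁ : 1 + w / c ≠ 0) (h₂ : 1 + c * w ≠ 0) :
    (1 + c * w)⁻¹ - (1 + w / c)⁻¹ = t ^ 2 / ((1 + w / c) * (1 + w⁻¹ / c)) := by
  have hc : c ≠ 0 := by rintro rfl; simp at ht
  have h₁' : c + w ≠ 0 := fun h => h₁ (by field_simp; linear_combination h)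
  have h₃ : 1 + w⁻¹ / c = (1 + c * w) / (c * w) := by field_simp; ring
  rw [h₃]
  field_simp
  linear_combination (-w) * ht

theorem norm_omegaN (N : ℕ) : ‖omegaN N‖ = 1 := by
  rw [omegaN, show 2 * Real.pi * I / N = ((2 * Real.pi / N : ℝ) : ℂ) * I by push_cast; ring]
  exact norm_exp_ofReal_mul_I _

theorem conj_omegaN (N : ℕ) : conj (omegaN N) = (omegaN N)⁻¹ :=
  (inv_eq_conj (norm_omegaN N)).symm

section CoinAmplitudes

variable {N : ℕ} {θ : ℝ} {lam : ℂ}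

theorem conj_one_add_mul_inv_omegaN_pow_div (hlam : ‖lam‖ = 1) (j : ℕ) :
    conj (1 + lam * (omegaN N)⁻¹ ^ j / (Real.cos θ : ℂ))
      = 1 + lam⁻¹ * omegaN N ^ j / (Real.cos θ : ℂ) := by
  simp [map_div₀, conj_omegaN, ← inv_eq_conj hlam, -ofReal_cos]

theorem one_add_mul_inv_omegaN_pow_div_ne_zero (hlam : ‖lam‖ = 1) (hc : |Real.cos θ| ≠ 1)
    (j : ℕ) : 1 + lam * (omegaN N)⁻¹ ^ j / (Real.cos θ : ℂ) ≠ 0 :=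
  one_add_ne_zero_of_norm_ne_one (by simpa [hlam, norm_omegaN, -ofReal_cos] using hc)

theorem norm_aCoef (hlam : ‖lam‖ = 1) (hc : |Real.cos θ| ≠ 1) (n : ℕ) :
    ‖aCoef N θ lam n‖ = 1 := by
  rw [aCoef, norm_mul, norm_pow, norm_inv, norm_omegaN, inv_one, one_pow, one_mul, norm_prod]
  refine Finset.prod_eq_one fun j _ => ?_
  rw [← conj_one_add_mul_inv_omegaN_pow_div hlam, norm_div, norm_conj,
    div_self (norm_ne_zero_iff.mpr (one_add_mul_inv_omegaN_pow_div_ne_zero hlam hc j))]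

theorem aCoef_mul_conj_self (hlam : ‖lam‖ = 1) (hc : |Real.cos θ| ≠ 1) (n : ℕ) :
    aCoef N θ lam n * conj (aCoef N θ lam n) = 1 := by
  rw [mul_conj', norm_aCoef hlam hc]
  norm_num

theorem aCoef_mul_conj_bCoef (hlam : ‖lam‖ = 1) (hc : |Real.cos θ| ≠ 1) (n : ℕ) :
    aCoef N θ lam n * conj (bCoef N θ lam n)
      = Real.tan θ * (1 + lam⁻¹ / Real.cos θ * omegaN N ^ n)⁻¹ := by
  rw [bCoef, map_div₀, map_mul, conj_one_add_mul_inv_omegaN_pow_div hlam, conj_ofReal,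
    mul_div_right_comm lam⁻¹]
  linear_combination (Real.tan θ * (1 + lam⁻¹ / Real.cos θ * omegaN N ^ n)⁻¹ : ℂ)
    * aCoef_mul_conj_self hlam hc n

theorem bCoef_mul_conj_aCoef (hlam : ‖lam‖ = 1) (hc : |Real.cos θ| ≠ 1) (n : ℕ) :
    bCoef N θ lam n * conj (aCoef N θ lam n)
      = Real.tan θ * (1 + lam / Real.cos θ * (omegaN N)⁻¹ ^ n)⁻¹ := by
  rw [bCoef, mul_div_right_comm lam]
  linear_combination (Real.tan θ * (1 + lam / Real.cos θ * (omegaN N)⁻¹ ^ n)⁻¹ : ℂ)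
    * aCoef_mul_conj_self hlam hc n

theorem bCoef_mul_conj_self (hlam : ‖lam‖ = 1) (hc₀ : Real.cos θ ≠ 0) (hc : |Real.cos θ| ≠ 1)
    (n : ℕ) :
    bCoef N θ lam n * conj (bCoef N θ lam n)
      = (1 + Real.cos θ * lam * (omegaN N)⁻¹ ^ n)⁻¹
        - (1 + lam / Real.cos θ * (omegaN N)⁻¹ ^ n)⁻¹ := by
  set w := lam * (omegaN N)⁻¹ ^ n with hw
  have hw1 : ‖w‖ = 1 := by simp [hw, hlam, norm_omegaN]
  have htan : (1 + (Real.tan θ : ℂ) ^ 2) * (Real.cos θ : ℂ) ^ 2 = 1 := by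
    exact_mod_cast Real.one_add_tan_sq_mul_cos_sq_eq_one hc₀
  rw [mul_assoc, ← hw, div_mul_eq_mul_div lam, ← hw, inv_one_add_mul_sub_inv_one_add_div htan
    (norm_ne_zero_iff.mp (by simp [hw1]))
    (by simpa [hw] using one_add_mul_inv_omegaN_pow_div_ne_zero hlam hc n)
    (one_add_ne_zero_of_norm_ne_one (by simpa [hw1, -ofReal_cos] using hc))]
  have hconj : conj (1 + w / (Real.cos θ : ℂ)) = 1 + w⁻¹ / (Real.cos θ : ℂ) := by
    simp [map_div₀, ← inv_eq_conj hw1, -ofReal_cos]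
  rw [bCoef, map_div₀, map_mul, ← hw, hconj, conj_ofReal, div_mul_div_comm, mul_mul_mul_comm,
    aCoef_mul_conj_self hlam hc n, one_mul, sq]

theorem coinRho_eq_smul (hN : Odd N) (hlam : ‖lam‖ = 1) (hc₀ : Real.cos θ ≠ 0)
    (hc : |Real.cos θ| ≠ 1) (C : ℂ) :
    coinRho N θ lam C = (1 / C) • !![(N : ℂ), Real.tan θ * (N / (1 + (lam⁻¹ / Real.cos θ) ^ N));
      Real.tan θ * (N / (1 + (lam / Real.cos θ) ^ N)),
      N / (1 + (Real.cos θ * lam) ^ N) - N / (1 + (lam / Real.cos θ) ^ N)] := by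
  have hω : IsPrimitiveRoot (omegaN N) N := isPrimitiveRoot_exp N hN.pos.ne'
  have hsum {ζ : ℂ} (hζ : IsPrimitiveRoot ζ N) {z : ℂ} (hz : ‖z‖ ≠ 1) :=
    hζ.sum_inv_one_add_mul_pow_of_odd hN (pow_ne_neg_one_of_norm_ne_one hz hN.pos.ne')
  have hc' : |Real.cos θ|⁻¹ ≠ 1 := by rwa [Ne, inv_eq_one]
  have h₁ := hsum hω (z := lam⁻¹ / Real.cos θ) (by simpa [hlam, -ofReal_cos] using hc')
  have h₂ := hsum hω.inv (z := lam / Real.cos θ) (by simpa [hlam, -ofReal_cos] using hc')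
  have h₃ := hsum hω.inv (z := Real.cos θ * lam) (by simpa [hlam, -ofReal_cos] using hc)
  ext i j
  fin_cases i <;> fin_cases j <;>
    simp [coinRho, aCoef_mul_conj_self hlam hc, aCoef_mul_conj_bCoef hlam hc,
      bCoef_mul_conj_aCoef hlam hc, bCoef_mul_conj_self hlam hc₀ hc, ← Finset.mul_sum,
      Finset.sum_sub_distrib, h₁, h₂, h₃, -ofReal_cos, -inv_pow]

end CoinAmplitudes

theorem coinRho_eq_of_pow_eq {N : ℕ} {θ : ℝ} {lam C s : ℂ} (hN : Odd N) (hlam : ‖lam‖ = 1)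
    (hc₀ : 0 < Real.cos θ) (hc₁ : Real.cos θ < 1) (hs : lam ^ N = s) (hs₂ : s ^ 2 = 1)
    (hC : C = 2 * N / (1 + s * (Real.cos θ : ℂ) ^ N)) :
    coinRho N θ lam C = !![(1 + s * (Real.cos θ : ℂ) ^ N) / 2,
      Real.tan θ * (s * (Real.cos θ : ℂ) ^ N) / 2;
      Real.tan θ * (s * (Real.cos θ : ℂ) ^ N) / 2, (1 - s * (Real.cos θ : ℂ) ^ N) / 2] := by
  set u := s * (Real.cos θ : ℂ) ^ N with hu
  have hs₀ : s ≠ 0 := by rintro rfl; norm_num at hs₂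
  have hc : (Real.cos θ : ℂ) ≠ 0 := ofReal_ne_zero.mpr hc₀.ne'
  have hsinv : s⁻¹ = s := inv_eq_of_mul_eq_one_right (by rw [← sq, hs₂])
  have hnorm : ‖u‖ < 1 := by
    have hs₁ : ‖s‖ = 1 := by
      rw [← pow_eq_one_iff_of_nonneg (norm_nonneg s) two_ne_zero, ← norm_pow, hs₂, norm_one]
    rw [hu, norm_mul, hs₁, one_mul, norm_pow, norm_real, Real.norm_of_nonneg hc₀.le]
    exact pow_lt_one₀ hc₀.le hc₁ hN.pos.ne'
  have hu₀ : u ≠ 0 := mul_ne_zero hs₀ (pow_ne_zero _ hc)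
  have hu₁ : 1 + u ≠ 0 := one_add_ne_zero_of_norm_ne_one hnorm.ne
  have hu₁' : u + 1 ≠ 0 := by rwa [add_comm]
  have hN₀ : (N : ℂ) ≠ 0 := Nat.cast_ne_zero.mpr hN.pos.ne'
  have hmul : ((Real.cos θ : ℂ) * lam) ^ N = u := by rw [mul_pow, hs, mul_comm]
  have hdiv : (lam / Real.cos θ) ^ N = u⁻¹ := by
    rw [div_pow, hs, hu, mul_inv, hsinv, div_eq_mul_inv]
  have hinv : (lam⁻¹ / Real.cos θ) ^ N = u⁻¹ := by
    rw [div_pow, inv_pow, hs, hu, mul_inv, div_eq_mul_inv]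
  rw [coinRho_eq_smul hN hlam hc₀.ne' (by rw [abs_of_pos hc₀]; exact hc₁.ne), hmul, hdiv, hinv, hC]
  ext i j
  fin_cases i <;> fin_cases j <;>
    simp [-ofReal_cos, -ofReal_tan] <;>
    field_simp <;> ring

theorem Matrix.charpoly_fin_two_eq_mul {R : Type*} [CommRing R] [Nontrivial R]
    (M : Matrix (Fin 2) (Fin 2) R) {p q : R} (htr : M.trace = p + q) (hdet : M.det = p * q) :
    M.charpoly = (Polynomial.X - Polynomial.C p) * (Polynomial.X - Polynomial.C q) := by
  rw [Matrix.charpoly_fin_two, htr, hdet, map_add, map_mul]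
  ring

theorem norm_exp_pi_mul_I_mul_div (k N : ℕ) :
    ‖Complex.exp (Real.pi * Complex.I * k / N)‖ = 1 := by
  rw [show (Real.pi : ℂ) * I * k / N = ((Real.pi * k / N : ℝ) : ℂ) * I by push_cast; ring]
  exact norm_exp_ofReal_mul_I _

theorem exp_pi_mul_I_mul_div_pow (k : ℕ) {N : ℕ} (hN : N ≠ 0) :
    Complex.exp (Real.pi * Complex.I * k / N) ^ N = (-1) ^ k := by
  rw [← exp_nat_mul, mul_div_cancel₀ _ (Nat.cast_ne_zero.mpr hN), mul_comm, exp_nat_mul,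
    exp_pi_mul_I]

theorem psw_coin_rho_eigenvalues_general (N : ℕ) (hN : Odd N)
    (θ : ℝ) (hθ : θ ∈ Set.Ioo 0 (Real.pi / 2))
    (k : ℕ)
    (lam : ℂ) (hlam : lam = Complex.exp (Real.pi * Complex.I * k / N))
    (C : ℂ) (hC : C = 2 * N / (1 + (-1 : ℂ) ^ k * (Real.cos θ : ℂ) ^ N)) :
    (coinRho N θ lam C).charpoly
      = (Polynomial.X - Polynomial.C (((1 + Real.cos θ ^ (N - 1)) / 2 : ℝ) : ℂ)) *
        (Polynomial.X - Polynomial.C (((1 - Real.cos θ ^ (N - 1)) / 2 : ℝ) : ℂ)) := by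
  have hc₀ : 0 < Real.cos θ := Real.cos_pos_of_mem_Ioo ⟨by linarith [hθ.1, Real.pi_pos], hθ.2⟩
  have hc₁ : Real.cos θ < 1 := by
    simpa using Real.cos_lt_cos_of_nonneg_of_le_pi le_rfl (by linarith [hθ.2, Real.pi_pos]) hθ.1
  have hs₂ : ((-1 : ℂ) ^ k) ^ 2 = 1 := by rw [← pow_mul, mul_comm, pow_mul, neg_one_sq, one_pow]
  have htan : (1 + (Real.tan θ : ℂ) ^ 2) * (Real.cos θ : ℂ) ^ 2 = 1 := by
    exact_mod_cast Real.one_add_tan_sq_mul_cos_sq_eq_one hc₀.ne'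
  have hpow : (Real.cos θ : ℂ) ^ N = (Real.cos θ : ℂ) ^ (N - 1) * Real.cos θ := by
    rw [← pow_succ, Nat.sub_add_cancel hN.pos]
  subst hlam
  rw [coinRho_eq_of_pow_eq hN (norm_exp_pi_mul_I_mul_div k N) hc₀ hc₁
    (exp_pi_mul_I_mul_div_pow k hN.pos.ne') hs₂ hC, Matrix.charpoly_fin_two_eq_mul]
  · rw [Matrix.trace_fin_two_of]
    push_cast
    ring
  · rw [Matrix.det_fin_two_of]
    push_cast at htan hpow ⊢
    rw [hpow]
    linear_combination (-(Complex.cos θ ^ (N - 1)) ^ 2 / 4) * hs₂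
      - ((-1) ^ k) ^ 2 * (Complex.cos θ ^ (N - 1)) ^ 2 / 4 * htan

/-- the eigenvalues of the coin reduced density matrix `ρ_k` are
`μ_± = (1 ± cos^(N−1)θ)/2` (its characteristic polynomial is
`(X − μ₊)(X − μ₋)`); in particular they do not depend on `k`. -/
theorem psw_coin_rho_eigenvalues (N : ℕ) [NeZero N] (hN : Odd N)
    (θ : ℝ) (hθ : θ ∈ Set.Ioo 0 (Real.pi / 2))
    (k : ℕ) (hk : k < 2 * N)
    (lam : ℂ) (hlam : lam = Complex.exp (Real.pi * Complex.I * k / N))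
    (C : ℂ) (hC : C = 2 * N / (1 + (-1 : ℂ) ^ k * (Real.cos θ : ℂ) ^ N)) :
    (coinRho N θ lam C).charpoly
      = (Polynomial.X - Polynomial.C (((1 + Real.cos θ ^ (N - 1)) / 2 : ℝ) : ℂ)) *
        (Polynomial.X - Polynomial.C (((1 - Real.cos θ ^ (N - 1)) / 2 : ℝ) : ℂ)) :=
  psw_coin_rho_eigenvalues_general N hN θ hθ k lam hlam C hC
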